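/- arXiv:1805.03031 — 6 statements merged into one kernel-verified Lean document; each statement's English description precedes it below -/
import Mathlib

section
/- Let x ∈ G and n ≥ 1 be such that xⁿ ∈ N, and let S be an intertwining operator for π^x satisfying the normalization π(xⁿ) ∘ Sⁿ = id_V. Then for every h ∈ N the operator π(h⁻¹) ∘ S satisfies π((xh)ⁿ) ∘ (π(h⁻¹) ∘ S)ⁿ = id_V, and for every g ∈ N the operator S ∘ π(g⁻¹) satisfies π((gx)ⁿ) ∘ (S ∘ π(g⁻¹))ⁿ = id_V. (Note that (xh)ⁿ and (gx)ⁿ lie in N since N is normal and xⁿ ∈ N.) -/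
/-!
If `S` intertwines `π` with its conjugate by `x`, then `S π(a) = π(x⁻¹ a x) S`, so every
product of factors `π(h⁻¹)` and `S` can be sorted into `π(a) Sᵏ`. For `(π(h⁻¹) S)ᵏ` the
collected element is `(xh)⁻ᵏ xᵏ`, hence `π((xh)ⁿ) (π(h⁻¹) S)ⁿ = π(xⁿ) Sⁿ = 1`. The second
identity is the first one for `h = x⁻¹ g x`, since `S π(g⁻¹) = π(h⁻¹) S` and `(gx)ⁿ = (xh)ⁿ`.
-/

section Intertwining

variable {G M : Type*} [Group G] [Monoid M] {N : Subgroup G} (ρ : N →* M) {x : G} {s : M}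

theorem pow_map_inv_mul_eq (hN : N.Normal)
    (hs : ∀ g g' : N, (g' : G) = x⁻¹ * g * x → ρ g' * s = s * ρ g) (h : N) :
    ∀ (k : ℕ) (a : N), (a : G) = (x * h)⁻¹ ^ k * x ^ k → (ρ h⁻¹ * s) ^ k = ρ a * s ^ k := by
  intro k
  induction k with
  | zero =>
    intro a ha
    obtain rfl : a = 1 := Subtype.ext (by simpa using ha)
    simp
  | succ k ih =>
    intro a ha
    set c : N := h * a
    have hc : (c : G) = x⁻¹ * ((x * h)⁻¹ ^ k * x ^ k) * x := by
      rw [Subgroup.coe_mul, ha, pow_succ' (x * h)⁻¹, pow_succ x, mul_inv_rev]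
      simp only [mul_assoc, mul_inv_cancel_left]
    let d : N := ⟨x * c * x⁻¹, hN.conj_mem c c.2 x⟩
    have hd : (d : G) = (x * h)⁻¹ ^ k * x ^ k := by simp only [d, hc]; group
    calc (ρ h⁻¹ * s) ^ (k + 1) = ρ h⁻¹ * (s * ρ d) * s ^ k := by
          rw [pow_succ', ih d hd]; simp only [mul_assoc]
      _ = ρ h⁻¹ * (ρ c * s) * s ^ k := by
          rw [hs d c (by simp only [d]; group)]
      _ = ρ a * s ^ (k + 1) := by
          rw [← mul_assoc, ← map_mul, inv_mul_cancel_left, mul_assoc, ← pow_succ']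

theorem map_mul_pow_map_inv_mul_eq_one (hN : N.Normal)
    (hs : ∀ g g' : N, (g' : G) = x⁻¹ * g * x → ρ g' * s = s * ρ g)
    {n : ℕ} (hxn : x ^ n ∈ N) (hnorm : ρ ⟨x ^ n, hxn⟩ * s ^ n = 1)
    (h p : N) (hp : (p : G) = (x * h) ^ n) :
    ρ p * (ρ h⁻¹ * s) ^ n = 1 := by
  have ha : ((p⁻¹ * ⟨x ^ n, hxn⟩ : N) : G) = (x * h)⁻¹ ^ n * x ^ n := by
    rw [Subgroup.coe_mul, Subgroup.coe_inv, hp, inv_pow]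
  rw [pow_map_inv_mul_eq ρ hN hs h n _ ha, ← mul_assoc, ← map_mul, mul_inv_cancel_left, hnorm]

theorem map_mul_pow_mul_map_inv_eq_one (hN : N.Normal)
    (hs : ∀ g g' : N, (g' : G) = x⁻¹ * g * x → ρ g' * s = s * ρ g)
    {n : ℕ} (hxn : x ^ n ∈ N) (hnorm : ρ ⟨x ^ n, hxn⟩ * s ^ n = 1)
    (g p : N) (hp : (p : G) = (g * x) ^ n) :
    ρ p * (s * ρ g⁻¹) ^ n = 1 := by
  let h : N := ⟨x⁻¹ * g * x, by simpa using hN.conj_mem g g.2 x⁻¹⟩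
  have hconj : ρ h⁻¹ * s = s * ρ g⁻¹ := hs g⁻¹ h⁻¹ (by
    simp only [h, Subgroup.coe_inv]; group)
  have hp' : (p : G) = (x * h) ^ n := by simp only [h, hp]; group
  rw [← hconj]
  exact map_mul_pow_map_inv_mul_eq_one ρ hN hs hxn hnorm h p hp'

end Intertwining

theorem normalization_transfers_general {G : Type*} [Group G] (N : Subgroup G) (hN : N.Normal)
    {V : Type*} [AddCommGroup V] [Module ℂ V]
    (π : Representation ℂ ↥N V) (x : G) (n : ℕ) (hxn : x ^ n ∈ N)
    (S : (Module.End ℂ V)ˣ)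
    (hS : ∀ g g' : ↥N, (↑g' : G) = x⁻¹ * ↑g * x →
      π g' * (↑S : Module.End ℂ V) = (↑S : Module.End ℂ V) * π g)
    (hnorm : π ⟨x ^ n, hxn⟩ * (↑S : Module.End ℂ V) ^ n = 1) :
    (∀ (h : ↥N) (p : ↥N), (↑p : G) = (x * ↑h) ^ n →
        π p * (π h⁻¹ * (↑S : Module.End ℂ V)) ^ n = 1) ∧
    (∀ (g : ↥N) (p : ↥N), (↑p : G) = (↑g * x) ^ n →
        π p * ((↑S : Module.End ℂ V) * π g⁻¹) ^ n = 1) :=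
  ⟨map_mul_pow_map_inv_mul_eq_one π hN hS hxn hnorm,
    map_mul_pow_mul_map_inv_eq_one π hN hS hxn hnorm⟩

/-- Let `N` be a normal subgroup of `G`, `(π, V)` a representation of
`N` on a complex vector space, `x ∈ G` and `n ≥ 1` with `xⁿ ∈ N`, and let `S` be an
intertwining operator for `π^x` with `π(xⁿ) ∘ Sⁿ = id`. Then for every `h ∈ N`,
`π((xh)ⁿ) ∘ (π(h⁻¹) ∘ S)ⁿ = id`, and for every `g ∈ N`,
`π((gx)ⁿ) ∘ (S ∘ π(g⁻¹))ⁿ = id` (the elements `(xh)ⁿ` and `(gx)ⁿ` lie in `N`). -/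
theorem normalization_transfers {G : Type*} [Group G] (N : Subgroup G) (hN : N.Normal)
    {V : Type*} [AddCommGroup V] [Module ℂ V]
    (π : Representation ℂ ↥N V) (x : G) (n : ℕ) (hn : 1 ≤ n) (hxn : x ^ n ∈ N)
    (S : (Module.End ℂ V)ˣ)
    (hS : ∀ g g' : ↥N, (↑g' : G) = x⁻¹ * ↑g * x →
      π g' * (↑S : Module.End ℂ V) = (↑S : Module.End ℂ V) * π g)
    (hnorm : π ⟨x ^ n, hxn⟩ * (↑S : Module.End ℂ V) ^ n = 1) :
    (∀ (h : ↥N) (p : ↥N), (↑p : G) = (x * ↑h) ^ n →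
        π p * (π h⁻¹ * (↑S : Module.End ℂ V)) ^ n = 1) ∧
    (∀ (g : ↥N) (p : ↥N), (↑p : G) = (↑g * x) ^ n →
        π p * ((↑S : Module.End ℂ V) * π g⁻¹) ^ n = 1) :=
  normalization_transfers_general N hN π x n hxn S hS hnorm
end

section
/- Assume V is nonzero and finite-dimensional and that π is irreducible (the only N-invariant subspaces of V are 0 and V). Let x ∈ G and n ≥ 1 be such that xⁿ ∈ N, and let S be an intertwining operator for π^x. Then there exists a nonzero complex number c such that the rescaled operator c·S satisfies the normalization π(xⁿ) ∘ (c·S)ⁿ = id_V. -/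
/-- Let `N` be a normal subgroup of `G` and `(π, V)` an irreducible
representation of `N` on a nonzero finite-dimensional complex vector space. Let `x ∈ G`
and `n ≥ 1` with `xⁿ ∈ N`, and let `S` be an intertwining operator for `π^x`. Then there
is a nonzero `c : ℂ` such that `π(xⁿ) ∘ (c • S)ⁿ = id`. -/
theorem exists_normalizing_scalar {G : Type*} [Group G] (N : Subgroup G) (hN : N.Normal)
    {V : Type*} [AddCommGroup V] [Module ℂ V] [Nontrivial V] [FiniteDimensional ℂ V]
    (π : Representation ℂ ↥N V)
    (hirr : ∀ U : Submodule ℂ V, (∀ (g : ↥N) (v : V), v ∈ U → π g v ∈ U) →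
      U = ⊥ ∨ U = ⊤)
    (x : G) (n : ℕ) (hn : 1 ≤ n) (hxn : x ^ n ∈ N)
    (S : (Module.End ℂ V)ˣ)
    (hS : ∀ g g' : ↥N, (↑g' : G) = x⁻¹ * ↑g * x →
      π g' * (↑S : Module.End ℂ V) = (↑S : Module.End ℂ V) * π g) :
    ∃ c : ℂ, c ≠ 0 ∧ π ⟨x ^ n, hxn⟩ * (c • (↑S : Module.End ℂ V)) ^ n = 1 := by
  have conjmem : ∀ (k : ℕ) (g : ↥N), (x⁻¹) ^ k * ↑g * x ^ k ∈ N := by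
    intro k g
    have := hN.conj_mem ↑g g.2 (x ^ k)⁻¹
    simpa [inv_pow] using this
  -- key intertwining relation for powers
  have key : ∀ (k : ℕ) (g g' : ↥N), (↑g' : G) = (x⁻¹) ^ k * ↑g * x ^ k →
      π g' * (↑S : Module.End ℂ V) ^ k = (↑S : Module.End ℂ V) ^ k * π g := by
    intro k
    induction k with
    | zero =>
      intro g g' h
      simp only [pow_zero, one_mul, mul_one] at h ⊢
      rw [Subtype.ext h]
    | succ k ih =>
      intro g g' h
      set gk : ↥N := ⟨(x⁻¹) ^ k * ↑g * x ^ k, conjmem k g⟩ with hgk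
      have h1 : π gk * (↑S : Module.End ℂ V) ^ k = (↑S : Module.End ℂ V) ^ k * π g :=
        ih g gk rfl
      have h2 : π g' * (↑S : Module.End ℂ V) = (↑S : Module.End ℂ V) * π gk := by
        apply hS gk g'
        rw [h]
        show (x⁻¹) ^ (k + 1) * ↑g * x ^ (k + 1) = x⁻¹ * ((x⁻¹) ^ k * ↑g * x ^ k) * x
        rw [pow_succ x, pow_succ' x⁻¹]
        group
      calc π g' * (↑S : Module.End ℂ V) ^ (k + 1)
          = (π g' * ↑S) * (↑S : Module.End ℂ V) ^ k := by rw [pow_succ' (↑S : Module.End ℂ V), ← mul_assoc]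
        _ = ↑S * (π gk * (↑S : Module.End ℂ V) ^ k) := by rw [h2, mul_assoc]
        _ = ↑S * ((↑S : Module.End ℂ V) ^ k * π g) := by rw [h1]
        _ = (↑S : Module.End ℂ V) ^ (k + 1) * π g := by rw [pow_succ' (↑S : Module.End ℂ V), mul_assoc]
  set y : ↥N := ⟨x ^ n, hxn⟩ with hy
  set T : Module.End ℂ V := π y * (↑S : Module.End ℂ V) ^ n with hT
  have hcomm : ∀ g : ↥N, T * π g = π g * T := by
    intro g
    set g' : ↥N := ⟨(x⁻¹) ^ n * ↑g * x ^ n, conjmem n g⟩ with hg'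
    have h1 : π g' * (↑S : Module.End ℂ V) ^ n = (↑S : Module.End ℂ V) ^ n * π g :=
      key n g g' rfl
    have h2 : y * g' = g * y := by
      apply Subtype.ext
      show x ^ n * ((x⁻¹) ^ n * ↑g * x ^ n) = ↑g * x ^ n
      group
    calc T * π g = π y * (π g' * (↑S : Module.End ℂ V) ^ n) := by
          rw [hT, mul_assoc, h1]
      _ = π (y * g') * (↑S : Module.End ℂ V) ^ n := by rw [map_mul, mul_assoc]
      _ = π (g * y) * (↑S : Module.End ℂ V) ^ n := by rw [h2]
      _ = π g * T := by rw [map_mul, hT, mul_assoc]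
  obtain ⟨μ, hμ⟩ := Module.End.exists_eigenvalue T
  -- the eigenspace is invariant, hence all of V
  have hinv : ∀ (g : ↥N) (v : V), v ∈ T.eigenspace μ → π g v ∈ T.eigenspace μ := by
    intro g v hv
    rw [Module.End.mem_eigenspace_iff] at hv ⊢
    calc T (π g v) = (T * π g) v := rfl
      _ = (π g * T) v := by rw [hcomm g]
      _ = π g (T v) := rfl
      _ = π g (μ • v) := by rw [hv]
      _ = μ • π g v := map_smul _ _ _
  have htop : T.eigenspace μ = ⊤ := by
    rcases hirr _ hinv with h | h
    · exact absurd h hμ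
    · exact h
  have hTv : ∀ v : V, T v = μ • v := by
    intro v
    have : v ∈ T.eigenspace μ := htop ▸ Submodule.mem_top
    rwa [Module.End.mem_eigenspace_iff] at this
  -- μ ≠ 0 since T is invertible
  have hμ0 : μ ≠ 0 := by
    intro hμ0
    obtain ⟨v, hv⟩ := exists_ne (0 : V)
    have h0 : T v = 0 := by rw [hTv v, hμ0, zero_smul]
    have h1 : π y (((↑S : Module.End ℂ V) ^ n) v) = 0 := h0
    have h2 : ((↑S : Module.End ℂ V) ^ n) v = 0 := by
      have := congrArg (π y⁻¹) h1
      rwa [← Module.End.mul_apply, ← map_mul, inv_mul_cancel, map_one, Module.End.one_apply,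
        map_zero] at this
    have h3 : (↑(S ^ n) : Module.End ℂ V) v = 0 := by rwa [Units.val_pow_eq_pow_val]
    have h4 : v = 0 := by
      have := congrArg (↑(S ^ n)⁻¹ : Module.End ℂ V) h3
      rwa [← Module.End.mul_apply, ← Units.val_mul, inv_mul_cancel, Units.val_one, Module.End.one_apply,
        map_zero] at this
    exact hv h4
  obtain ⟨c, hc⟩ := IsAlgClosed.exists_pow_nat_eq (μ⁻¹ : ℂ) (by omega : 0 < n)
  refine ⟨c, ?_, ?_⟩
  · intro h
    rw [h, zero_pow (by omega : n ≠ 0)] at hc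
    exact inv_ne_zero hμ0 hc.symm
  · ext v
    have : (π y * (c • (↑S : Module.End ℂ V)) ^ n) v = c ^ n • T v := by
      simp only [smul_pow, Module.End.mul_apply, LinearMap.smul_apply, hT, map_smul]
    rw [this, hTv v, hc, smul_smul, inv_mul_cancel₀ hμ0]
    simp
end

section
/- Assume moreover that S(x)^{ord(x)} = id_V for every x ∈ F, where ord(x) denotes the order of x in F. Then for every x ∈ F one has ∏_{y ∈ F} β(x,y) = 1 and ∏_{y ∈ F} β(y,x) = 1. -/
/-- Let `F` be a finite group, `V` a nonzero complex vector space,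
`S : F → GL(V)` and `β : F × F → ℂ` with `S(y) ∘ S(x) = β(x,y) • S(xy)`. Assume further
that `S(x)^{ord(x)} = id` for every `x ∈ F`. Then for every `x ∈ F`,
`∏_{y ∈ F} β(x,y) = 1` and `∏_{y ∈ F} β(y,x) = 1`. -/
theorem beta_product_one {F : Type*} [Group F] [Fintype F]
    {V : Type*} [AddCommGroup V] [Module ℂ V] [Nontrivial V]
    (S : F → (Module.End ℂ V)ˣ) (β : F → F → ℂ)
    (hβ : ∀ x y : F, (↑(S y) : Module.End ℂ V) * (↑(S x) : Module.End ℂ V) =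
      β x y • (↑(S (x * y)) : Module.End ℂ V))
    (hord : ∀ x : F, S x ^ orderOf x = 1) :
    ∀ x : F, (∏ y : F, β x y) = 1 ∧ (∏ y : F, β y x) = 1 := by
  classical
  obtain ⟨v, hv⟩ := exists_ne (0 : V)
  -- cancellation of scalars against a unit endomorphism
  have hEndsmul : ∀ (c d : ℂ) (u : (Module.End ℂ V)ˣ),
      c • (u : Module.End ℂ V) = d • (u : Module.End ℂ V) → c = d := by
    intro c d u h
    have h0 : (c - d) • (u : Module.End ℂ V) = 0 := by
      rw [sub_smul, h, sub_self]
    have h1 : (c - d) • ((u : Module.End ℂ V) v) = 0 := by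
      have := congrArg (fun f : Module.End ℂ V => f v) h0
      simpa using this
    have huv : (u : Module.End ℂ V) v ≠ 0 := by
      intro hz
      have h2 : ((u⁻¹ * u : (Module.End ℂ V)ˣ) : Module.End ℂ V) v = v := by
        simp
      rw [Units.val_mul, Module.End.mul_apply, hz, map_zero] at h2
      exact hv h2.symm
    rcases smul_eq_zero.mp h1 with h2 | h2
    · linear_combination h2
    · exact absurd h2 huv
  have hscal : ∀ c : ℂ, c • (1 : Module.End ℂ V) = 1 → c = 1 := by
    intro c hc
    exact hEndsmul c 1 1 (by simpa using hc)
  -- S 1 = 1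
  have S1 : ((S 1 : (Module.End ℂ V)ˣ) : Module.End ℂ V) = 1 := by
    have := hord 1
    rw [orderOf_one, pow_one] at this
    rw [this, Units.val_one]
  -- β x 1 = 1 and β 1 y = 1
  have βx1 : ∀ x : F, β x 1 = 1 := by
    intro x
    have h := hβ x 1
    rw [S1, one_mul, mul_one] at h
    exact (hEndsmul (β x 1) 1 (S x) (by simpa using h.symm))
  have β1y : ∀ y : F, β 1 y = 1 := by
    intro y
    have h := hβ 1 y
    rw [S1, mul_one, one_mul] at h
    exact (hEndsmul (β 1 y) 1 (S y) (by simpa using h.symm))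
  -- cocycle identity
  have hc : ∀ x y z : F, β x y * β (x * y) z = β y z * β x (y * z) := by
    intro x y z
    have e1 : ((S z : Module.End ℂ V) * (S y : Module.End ℂ V)) * (S x : Module.End ℂ V)
        = (β y z * β x (y * z)) • ((S (x * (y * z)) : (Module.End ℂ V)ˣ) : Module.End ℂ V) := by
      rw [hβ y z, smul_mul_assoc, hβ x (y * z), smul_smul]
    have e2 : ((S z : Module.End ℂ V) * (S y : Module.End ℂ V)) * (S x : Module.End ℂ V)
        = (β x y * β (x * y) z) • ((S (x * y * z) : (Module.End ℂ V)ˣ) : Module.End ℂ V) := by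
      rw [mul_assoc, hβ x y, mul_smul_comm, hβ (x * y) z, smul_smul]
    rw [e1, ← mul_assoc] at e2
    exact (hEndsmul _ _ (S (x * y * z)) e2).symm
  -- power formulas
  have powC' : ∀ (x : F) (k : ℕ), ((S x ^ k : (Module.End ℂ V)ˣ) : Module.End ℂ V)
      = (∏ i ∈ Finset.range k, β x (x ^ i)) • ((S (x ^ k) : (Module.End ℂ V)ˣ) : Module.End ℂ V) := by
    intro x k
    induction k with
    | zero => simp [S1]
    | succ k ih =>
      rw [pow_succ, Units.val_mul, ih, smul_mul_assoc, hβ x (x ^ k), smul_smul,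
        Finset.prod_range_succ, ← pow_succ']
  have powC : ∀ (x : F) (k : ℕ), ((S x ^ k : (Module.End ℂ V)ˣ) : Module.End ℂ V)
      = (∏ i ∈ Finset.range k, β (x ^ i) x) • ((S (x ^ k) : (Module.End ℂ V)ˣ) : Module.End ℂ V) := by
    intro x k
    induction k with
    | zero => simp [S1]
    | succ k ih =>
      rw [pow_succ', Units.val_mul, ih, mul_smul_comm, hβ (x ^ k) x, smul_smul,
        Finset.prod_range_succ, ← pow_succ]
  -- the two cyclic products are 1
  have hC' : ∀ x : F, (∏ i ∈ Finset.range (orderOf x), β x (x ^ i)) = 1 := by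
    intro x
    have h := powC' x (orderOf x)
    rw [hord x, Units.val_one, pow_orderOf_eq_one, S1] at h
    exact hscal _ h.symm
  have hC : ∀ x : F, (∏ i ∈ Finset.range (orderOf x), β (x ^ i) x) = 1 := by
    intro x
    have h := powC x (orderOf x)
    rw [hord x, Units.val_one, pow_orderOf_eq_one, S1] at h
    exact hscal _ h.symm
  -- telescoping claims
  have claimA : ∀ (x y : F) (k : ℕ),
      (∏ i ∈ Finset.range k, β x (x ^ i * y)) * β 1 y
        = (∏ i ∈ Finset.range k, β x (x ^ i)) * β (x ^ k) y := by
    intro x y k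
    induction k with
    | zero => simp
    | succ k ih =>
      rw [Finset.prod_range_succ, Finset.prod_range_succ, pow_succ']
      have hcc := hc x (x ^ k) y
      linear_combination β x (x ^ k * y) * ih
        - (∏ i ∈ Finset.range k, β x (x ^ i)) * hcc
  have claimB : ∀ (x y : F) (k : ℕ),
      (∏ i ∈ Finset.range k, β (y * x ^ i) x) * β y 1
        = (∏ i ∈ Finset.range k, β (x ^ i) x) * β y (x ^ k) := by
    intro x y k
    induction k with
    | zero => simp
    | succ k ih =>
      rw [Finset.prod_range_succ, Finset.prod_range_succ, pow_succ]
      have hcc := hc y (x ^ k) x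
      linear_combination β (y * x ^ k) x * ih
        + (∏ i ∈ Finset.range k, β (x ^ i) x) * hcc
  have rowA : ∀ (x y : F), (∏ i ∈ Finset.range (orderOf x), β x (x ^ i * y)) = 1 := by
    intro x y
    have h := claimA x y (orderOf x)
    rw [hC' x, pow_orderOf_eq_one, β1y y, mul_one, one_mul] at h
    exact h
  have rowB : ∀ (x y : F), (∏ i ∈ Finset.range (orderOf x), β (y * x ^ i) x) = 1 := by
    intro x y
    have h := claimB x y (orderOf x)
    rw [hC x, pow_orderOf_eq_one, βx1 y, mul_one, one_mul] at h
    exact h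
  -- main argument
  intro x
  have hnpos : 0 < orderOf x := orderOf_pos x
  set H := Subgroup.zpowers x with hH
  haveI : Fintype (F ⧸ H) := Fintype.ofFinite _
  have key : ∀ (ψ : (F ⧸ H) × Fin (orderOf x) → F), Function.Bijective ψ →
      ∀ g : F → ℂ, (∀ q : F ⧸ H, ∏ i : Fin (orderOf x), g (ψ (q, i)) = 1) →
      ∏ y : F, g y = 1 := by
    intro ψ hψ g hg
    rw [← Fintype.prod_bijective ψ hψ (fun p => g (ψ p)) g (fun p => rfl),
      Fintype.prod_prod_type]
    calc (∏ q : F ⧸ H, ∏ i : Fin (orderOf x), g (ψ (q, i)))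
        = ∏ _q : F ⧸ H, (1 : ℂ) := Finset.prod_congr rfl (fun q _ => hg q)
      _ = 1 := by simp
  constructor
  · -- ∏ y, β x y = 1 ; use ψ (q, i) = x ^ i * q.out⁻¹
    refine key (fun p => x ^ ((p.2 : ℕ)) * (p.1.out)⁻¹) ⟨?_, ?_⟩ (fun y => β x y) ?_
    · rintro ⟨q, i⟩ ⟨q', j⟩ h
      simp only at h
      have hmk : ∀ (r : F ⧸ H) (a : ℕ), (((x ^ a * (r.out)⁻¹)⁻¹ : F) : F ⧸ H) = r := by
        intro r a
        rw [mul_inv_rev, inv_inv]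
        rw [QuotientGroup.mk_mul_of_mem _ (H.inv_mem (Subgroup.npow_mem_zpowers x a))]
        exact QuotientGroup.out_eq' r
      have hq : q = q' := by
        rw [← hmk q i, ← hmk q' j, h]
      subst hq
      have hx : x ^ (i : ℕ) = x ^ (j : ℕ) := mul_right_cancel h
      have hij : (i : ℕ) = (j : ℕ) := pow_injOn_Iio_orderOf i.isLt j.isLt hx
      exact Prod.ext rfl (Fin.ext hij)
    · intro y
      set q : F ⧸ H := QuotientGroup.mk y⁻¹ with hq
      have hmem : y * q.out ∈ H := by
        have : (q.out : F ⧸ H) = (y⁻¹ : F) := QuotientGroup.out_eq' q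
        have h2 : q.out⁻¹ * y⁻¹ ∈ H := QuotientGroup.eq.mp this
        have := H.inv_mem h2
        simpa [mul_inv_rev] using this
      obtain ⟨k, hk⟩ := (Submonoid.mem_powers_iff _ _).mp (mem_powers_iff_mem_zpowers.mpr hmem)
      refine ⟨(q, ⟨k % orderOf x, Nat.mod_lt _ hnpos⟩), ?_⟩
      simp only
      rw [pow_mod_orderOf, hk]
      group
    · intro q
      rw [Fin.prod_univ_eq_prod_range (fun i => β x (x ^ i * (q.out)⁻¹))]
      exact rowA x (q.out)⁻¹
  · -- ∏ y, β y x = 1 ; use φ (q, i) = q.out * x ^ i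
    refine key (fun p => p.1.out * x ^ ((p.2 : ℕ))) ⟨?_, ?_⟩ (fun y => β y x) ?_
    · rintro ⟨q, i⟩ ⟨q', j⟩ h
      simp only at h
      have hmk : ∀ (r : F ⧸ H) (a : ℕ), ((r.out * x ^ a : F) : F ⧸ H) = r := by
        intro r a
        rw [QuotientGroup.mk_mul_of_mem _ (Subgroup.npow_mem_zpowers x a)]
        exact QuotientGroup.out_eq' r
      have hq : q = q' := by
        rw [← hmk q i, ← hmk q' j, h]
      subst hq
      have hx : x ^ (i : ℕ) = x ^ (j : ℕ) := mul_left_cancel h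
      have hij : (i : ℕ) = (j : ℕ) := pow_injOn_Iio_orderOf i.isLt j.isLt hx
      exact Prod.ext rfl (Fin.ext hij)
    · intro y
      set q : F ⧸ H := QuotientGroup.mk y with hq
      have hmem : q.out⁻¹ * y ∈ H := by
        have : (q.out : F ⧸ H) = (y : F) := QuotientGroup.out_eq' q
        exact QuotientGroup.eq.mp this
      obtain ⟨k, hk⟩ := (Submonoid.mem_powers_iff _ _).mp (mem_powers_iff_mem_zpowers.mpr hmem)
      refine ⟨(q, ⟨k % orderOf x, Nat.mod_lt _ hnpos⟩), ?_⟩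
      simp only
      rw [pow_mod_orderOf, hk]
      group
    · intro q
      rw [Fin.prod_univ_eq_prod_range (fun i => β (q.out * x ^ i) x)]
      exact rowB x q.out
end

section
/- Assume that for every x ∈ G with x ∉ N, the conjugate representation π^x is not isomorphic to π (i.e., there is no invertible linear map T : V → V with T ∘ π(x⁻¹gx) = π(g) ∘ T for all g ∈ N). Then the induced representation Ind_N^G π is irreducible. -/
def IndSubmodule {G : Type*} [Group G] (H : Subgroup G) {W : Type*}
    [AddCommGroup W] [Module ℂ W] (ρ : Representation ℂ ↥H W) :
    Submodule ℂ (G → W) where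
  carrier := {f | ∀ (g : G) (h : ↥H), f (g * ↑h) = ρ h⁻¹ (f g)}
  add_mem' := by
    intro a b ha hb g h
    simp only [Pi.add_apply, ha g h, hb g h, map_add]
  zero_mem' := by
    intro g h
    simp
  smul_mem' := by
    intro c f hf g h
    simp only [Pi.smul_apply, hf g h, map_smul]

def IndRep {G : Type*} [Group G] (H : Subgroup G) {W : Type*}
    [AddCommGroup W] [Module ℂ W] (ρ : Representation ℂ ↥H W) :
    Representation ℂ G ↥(IndSubmodule H ρ) where
  toFun x :=
    { toFun := fun f => ⟨fun g => (f : G → W) (x⁻¹ * g), by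
        intro g h
        show (f : G → W) (x⁻¹ * (g * ↑h)) = ρ h⁻¹ ((f : G → W) (x⁻¹ * g))
        rw [← mul_assoc]
        exact f.2 (x⁻¹ * g) h⟩
      map_add' := by intro a b; ext g; rfl
      map_smul' := by intro c a; ext g; rfl }
  map_one' := by
    ext f g
    simp
  map_mul' := by
    intro a b
    ext f g
    simp [mul_assoc]

/-!
Let `U` be a nonzero `G`-stable subspace of `Ind π` and pick `f ∈ U`, `f ≠ 0`, whose support in
`G ⧸ N` is minimal; after a translation `f 1 ≠ 0`. The elements of `U` supported inside the
support of `f` form an `N`-stable subspace `W` on which evaluation at `1` is injective (by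
minimality), hence an isomorphism `W ≅ π` since `π` is irreducible. Evaluation at `x` is an
intertwiner `W → π^x`, so for `x ∉ N` Schur's lemma forces it to vanish: `f` is supported on `N`.
Then `f` is the function concentrated on `N` with value `f 1` at `1`; the vectors `v` whose
concentrated function lies in `U` form a nonzero `N`-stable subspace of `V`, hence all of `V`,
and the `G`-translates of these functions span `Ind π`.
-/

namespace Representation

variable {k G V : Type*} [Field k] [AddCommGroup V] [Module k V]

section Monoid

variable [Monoid G]

theorem isIrreducible_iff {ρ : Representation k G V} :
    ρ.IsIrreducible ↔ Nontrivial V ∧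
      ∀ U : Submodule k V, (∀ (g : G) (v : V), v ∈ U → ρ g v ∈ U) → U = ⊥ ∨ U = ⊤ := by
  constructor
  · intro h
    refine ⟨?_, fun U hU => ?_⟩
    · obtain ⟨v, -, hv⟩ := (⊤ : Submodule k V).ne_bot_iff.1
        fun h' => bot_ne_top (Subrepresentation.toSubmodule_injective (ρ := ρ) h').symm
      exact ⟨v, 0, hv⟩
    · rcases IsSimpleOrder.eq_bot_or_eq_top (⟨U, fun g v hv => hU g v hv⟩ : Subrepresentation ρ)
        with h | h
      · exact .inl congr(($h).toSubmodule)
      · exact .inr congr(($h).toSubmodule)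
  · rintro ⟨hV, h⟩
    have : Nontrivial (Subrepresentation ρ) :=
      ⟨⊥, ⊤, fun h' => bot_ne_top (congrArg Subrepresentation.toSubmodule h')⟩
    refine ⟨fun σ => ?_⟩
    rcases h σ.toSubmodule fun g v hv => σ.apply_mem_toSubmodule g hv with h | h
    · exact .inl (Subrepresentation.toSubmodule_injective h)
    · exact .inr (Subrepresentation.toSubmodule_injective h)

theorem IsIrreducible.comp {H : Type*} [Monoid H] {ρ : Representation k G V} [ρ.IsIrreducible]
    {φ : H →* G} (hφ : Function.Surjective φ) : IsIrreducible (ρ.comp φ) := by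
  obtain ⟨hV, h⟩ := isIrreducible_iff.1 ‹ρ.IsIrreducible›
  refine isIrreducible_iff.2 ⟨hV, fun U hU => h U fun g v hv => ?_⟩
  obtain ⟨g, rfl⟩ := hφ g
  exact hU g v hv

end Monoid

variable [Group G] {N : Subgroup G} [N.Normal]

/-- The conjugate representation `π^x : n ↦ π (x⁻¹ n x)`. -/
def conjugate (π : Representation k N V) (x : G) : Representation k N V :=
  π.comp (MulAut.conjNormal x).symm.toMonoidHom

theorem conjugate_apply (π : Representation k N V) (x : G) (n : N) :
    π.conjugate x n = π ((MulAut.conjNormal x).symm n) := rfl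

instance (π : Representation k N V) [π.IsIrreducible] (x : G) : (π.conjugate x).IsIrreducible :=
  IsIrreducible.comp (MulEquiv.surjective _)

theorem isEmpty_equiv_conjugate {π : Representation k N V} {x : G}
    (h : ¬∃ T : V ≃ₗ[k] V, ∀ g g' : N, (g' : G) = x⁻¹ * g * x →
      (T : V →ₗ[k] V) ∘ₗ (π g' : V →ₗ[k] V) = (π g : V →ₗ[k] V) ∘ₗ (T : V →ₗ[k] V)) :
    IsEmpty (π.Equiv (π.conjugate x)) := by
  refine ⟨fun φ => h ⟨φ.symm.toLinearEquiv, fun g g' hg' => ?_⟩⟩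
  have : (MulAut.conjNormal x).symm g = g' := Subtype.ext (by simp [hg'])
  simpa [conjugate_apply, this] using φ.symm.isIntertwining' g

end Representation

open Representation

section Induced

open scoped Pointwise

variable {G : Type*} [Group G] {N : Subgroup G}
  {V : Type*} [AddCommGroup V] [Module ℂ V] {π : Representation ℂ N V}

theorem IndSubmodule.apply_eq_of_inv_mul_mem (f : IndSubmodule N π) {x y : G}
    (h : x⁻¹ * y ∈ N) : (f : G → V) y = π ⟨x⁻¹ * y, h⟩⁻¹ ((f : G → V) x) := by
  simpa using f.2 x ⟨x⁻¹ * y, h⟩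

theorem IndSubmodule.apply_eq_zero_iff_of_inv_mul_mem (f : IndSubmodule N π) {x y : G}
    (h : x⁻¹ * y ∈ N) : (f : G → V) y = 0 ↔ (f : G → V) x = 0 := by
  rw [IndSubmodule.apply_eq_of_inv_mul_mem f h]
  refine ⟨fun h0 => ?_, fun h0 => by rw [h0, map_zero]⟩
  simpa using congrArg (π ⟨x⁻¹ * y, h⟩) h0

theorem indRep_apply (x : G) (f : IndSubmodule N π) (g : G) :
    (IndRep N π x f : G → V) g = (f : G → V) (x⁻¹ * g) := rfl

theorem indRep_apply_one (n : N) (f : IndSubmodule N π) :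
    (IndRep N π n f : G → V) 1 = π n ((f : G → V) 1) := by
  rw [indRep_apply]
  simpa using f.2 1 n⁻¹

theorem indRep_apply_eq_conjugate [N.Normal] (n : N) (f : IndSubmodule N π) (x : G) :
    (IndRep N π n f : G → V) x = π.conjugate x n ((f : G → V) x) := by
  have := f.2 x ((MulAut.conjNormal x).symm n⁻¹)
  rw [indRep_apply]
  simpa [conjugate_apply, mul_assoc] using this

open Classical in
variable (π) in
noncomputable def indSingle : V →ₗ[ℂ] IndSubmodule N π where
  toFun v := ⟨fun g => if h : g ∈ N then π ⟨g, h⟩⁻¹ v else 0, by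
    intro g n
    beta_reduce
    by_cases hg : g ∈ N
    · have hgn : g * n ∈ N := N.mul_mem hg n.2
      rw [dif_pos hgn, dif_pos hg, ← Module.End.mul_apply, ← map_mul]
      congr 2
      ext
      simp
    · have hgn : g * n ∉ N := fun h => hg (by simpa using N.mul_mem h (N.inv_mem n.2))
      rw [dif_neg hgn, dif_neg hg, map_zero]⟩
  map_add' v w := by
    ext g
    by_cases hg : g ∈ N <;> simp [hg]
  map_smul' c v := by
    ext g
    by_cases hg : g ∈ N <;> simp [hg]

theorem indSingle_apply_of_mem (v : V) {g : G} (hg : g ∈ N) :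
    (indSingle π v : G → V) g = π ⟨g, hg⟩⁻¹ v := dif_pos hg

theorem indSingle_apply_of_notMem (v : V) {g : G} (hg : g ∉ N) :
    (indSingle π v : G → V) g = 0 := dif_neg hg

theorem indSingle_rep_apply (n : N) (v : V) :
    indSingle π (π n v) = IndRep N π n (indSingle π v) := by
  ext g
  rw [indRep_apply]
  by_cases hg : g ∈ N
  · have hg' : (n : G)⁻¹ * g ∈ N := N.mul_mem (N.inv_mem n.2) hg
    rw [indSingle_apply_of_mem _ hg, indSingle_apply_of_mem _ hg', ← Module.End.mul_apply,
      ← map_mul]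
    congr 2
    ext
    simp
  · have hg' : (n : G)⁻¹ * g ∉ N := fun h => hg (by simpa using N.mul_mem n.2 h)
    rw [indSingle_apply_of_notMem _ hg, indSingle_apply_of_notMem _ hg']

theorem eq_indSingle_of_apply_eq_zero (f : IndSubmodule N π)
    (hf : ∀ x ∉ N, (f : G → V) x = 0) : f = indSingle π ((f : G → V) 1) := by
  ext g
  by_cases hg : g ∈ N
  · rw [indSingle_apply_of_mem _ hg, IndSubmodule.apply_eq_of_inv_mul_mem f (x := 1) (by simpa)]
    simp
  · rw [indSingle_apply_of_notMem _ hg, hf g hg]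

theorem sum_indRep_indSingle [Fintype (G ⧸ N)] (f : IndSubmodule N π) :
    ∑ c : G ⧸ N, IndRep N π c.out (indSingle π ((f : G → V) c.out)) = f := by
  ext g
  have hg : (Quotient.out (g : G ⧸ N))⁻¹ * g ∈ N := QuotientGroup.eq.1 (QuotientGroup.out_eq' _)
  rw [Submodule.coe_sum, Finset.sum_apply, Finset.sum_eq_single (g : G ⧸ N)]
  · rw [indRep_apply, indSingle_apply_of_mem _ hg, ← IndSubmodule.apply_eq_of_inv_mul_mem f hg]
  · intro c _ hc
    rw [indRep_apply, indSingle_apply_of_notMem]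
    exact fun h => hc (by rw [← QuotientGroup.out_eq' c, QuotientGroup.eq.2 h])
  · exact fun h => absurd (Finset.mem_univ _) h

def indSupport (f : IndSubmodule N π) : Set (G ⧸ N) :=
  (↑) '' {g | (f : G → V) g ≠ 0}

theorem mk_mem_indSupport {f : IndSubmodule N π} {g : G} :
    (g : G ⧸ N) ∈ indSupport f ↔ (f : G → V) g ≠ 0 := by
  refine ⟨?_, fun h => ⟨g, h, rfl⟩⟩
  rintro ⟨g', hg', hgg'⟩
  rwa [Ne, IndSubmodule.apply_eq_zero_iff_of_inv_mul_mem f (QuotientGroup.eq.1 hgg')]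

theorem indSupport_indRep (x : G) (f : IndSubmodule N π) :
    indSupport (IndRep N π x f) = x • indSupport f := by
  ext c
  induction c using QuotientGroup.induction_on with | H g => ?_
  rw [Set.mem_smul_set_iff_inv_smul_mem, mk_mem_indSupport, indRep_apply]
  exact mk_mem_indSupport.symm

theorem indSupport_indRep_of_mem [N.Normal] (n : N) (f : IndSubmodule N π) :
    indSupport (IndRep N π n f) = indSupport f := by
  ext c
  induction c using QuotientGroup.induction_on with | H g => ?_
  rw [mk_mem_indSupport, mk_mem_indSupport, indRep_apply, Ne, Ne,
    IndSubmodule.apply_eq_zero_iff_of_inv_mul_mem f (x := g)]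
  simpa [mul_assoc] using ‹N.Normal›.conj_mem _ (N.inv_mem n.2) g⁻¹

variable (π) in
def indSupported (s : Set (G ⧸ N)) : Submodule ℂ (IndSubmodule N π) where
  carrier := {f | indSupport f ⊆ s}
  add_mem' := by
    rintro a b ha hb _ ⟨g, hg, rfl⟩
    by_cases hag : (a : G → V) g = 0
    · exact hb ⟨g, by simpa [hag] using hg, rfl⟩
    · exact ha ⟨g, hag, rfl⟩
  zero_mem' := by
    rintro _ ⟨g, hg, rfl⟩
    exact absurd rfl hg
  smul_mem' := by
    rintro c a ha _ ⟨g, hg, rfl⟩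
    exact ha ⟨g, right_ne_zero_of_smul (show c • (a : G → V) g ≠ 0 from hg), rfl⟩

theorem exists_indSupport_minimal_apply_one_ne_zero [N.FiniteIndex]
    (U : Submodule ℂ (IndSubmodule N π))
    (hU : ∀ (x : G) (w : IndSubmodule N π), w ∈ U → IndRep N π x w ∈ U) (hU0 : U ≠ ⊥) :
    ∃ f ∈ U, (f : G → V) 1 ≠ 0 ∧ ∀ a ∈ U, indSupport a ⊂ indSupport f → a = 0 := by
  obtain ⟨f₀, ⟨hf₀U, hf₀⟩, hmin⟩ := (InvImage.wf indSupport wellFounded_lt).has_min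
    {f | f ∈ U ∧ f ≠ 0} ((Submodule.ne_bot_iff U).1 hU0)
  obtain ⟨y, hy⟩ : ∃ y, (f₀ : G → V) y ≠ 0 := by
    by_contra! h
    exact hf₀ (Subtype.ext (funext h))
  refine ⟨IndRep N π y⁻¹ f₀, hU _ _ hf₀U, by simpa [indRep_apply] using hy, fun a haU ha => ?_⟩
  by_contra ha0
  refine hmin (IndRep N π y a) ⟨hU _ _ haU, fun h => ha0 ?_⟩ ?_
  · simpa using congrArg (IndRep N π y⁻¹) h
  · change indSupport (IndRep N π y a) ⊂ indSupport f₀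
    rw [indSupport_indRep] at ha ⊢
    rw [← smul_inv_smul y (indSupport f₀)]
    exact ⟨Set.smul_set_mono ha.1, fun h => ha.2 (Set.smul_set_subset_smul_set_iff.1 h)⟩

variable (π) in
def indEval (g : G) : IndSubmodule N π →ₗ[ℂ] V :=
  LinearMap.proj g ∘ₗ (IndSubmodule N π).subtype

theorem apply_eq_zero_of_indSupport_minimal [N.Normal] [π.IsIrreducible] {x : G}
    [IsEmpty (π.Equiv (π.conjugate x))] (U : Submodule ℂ (IndSubmodule N π))
    (hU : ∀ (n : N) (w : IndSubmodule N π), w ∈ U → IndRep N π n w ∈ U)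
    {f : IndSubmodule N π} (hfU : f ∈ U) (hf1 : (f : G → V) 1 ≠ 0)
    (hmin : ∀ a ∈ U, indSupport a ⊂ indSupport f → a = 0) : (f : G → V) x = 0 := by
  let W : Subrepresentation ((IndRep N π).comp N.subtype) :=
    ⟨U ⊓ indSupported π (indSupport f), fun n a ⟨haU, ha⟩ =>
      ⟨hU n a haU, (indSupport_indRep_of_mem n a).trans_subset ha⟩⟩
  have hfW : f ∈ W.toSubmodule := ⟨hfU, (subset_rfl : indSupport f ⊆ _)⟩
  let p : IntertwiningMap W.toRepresentation π :=
    (indEval π 1 ∘ₗ W.toSubmodule.subtype).intertwiningMap_of_isIntertwiningMap _ _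
      fun n a => indRep_apply_one n a.1
  let q : IntertwiningMap W.toRepresentation (π.conjugate x) :=
    (indEval π x ∘ₗ W.toSubmodule.subtype).intertwiningMap_of_isIntertwiningMap _ _
      fun n a => indRep_apply_eq_conjugate n a.1 x
  have hp_inj : Function.Injective p := by
    intro a b hab
    have hab' : a.1 - b.1 ∈ W.toSubmodule := W.toSubmodule.sub_mem a.2 b.2
    refine Subtype.ext (sub_eq_zero.1 (hmin _ hab'.1 ⟨hab'.2, fun h => ?_⟩))
    exact mk_mem_indSupport.1 (h (mk_mem_indSupport.2 hf1)) (sub_eq_zero.2 hab)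
  have hp_surj : Function.Surjective p := by
    refine fun v => (IsSimpleOrder.eq_bot_or_eq_top p.range).elim (fun h => ?_) (fun h => ?_)
    · have : p ⟨f, hfW⟩ ∈ p.range := ⟨_, rfl⟩
      rw [h] at this
      exact absurd ((Submodule.mem_bot ℂ).1 this) hf1
    · obtain ⟨a, ha⟩ : v ∈ p.range := h ▸ trivial
      exact ⟨a, ha⟩
  let e := p.ofBijective ⟨hp_inj, hp_surj⟩
  -- Schur: `π` and `π^x` are irreducible and not isomorphic.
  have hq : q.comp e.symm.toIntertwiningMap = 0 := Subsingleton.elim _ _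
  calc (f : G → V) x = q ⟨f, hfW⟩ := rfl
    _ = q.comp e.symm.toIntertwiningMap (e ⟨f, hfW⟩) := by simp
    _ = 0 := by rw [hq]; rfl

theorem eq_top_of_indSingle_mem [N.FiniteIndex] [π.IsIrreducible]
    (U : Submodule ℂ (IndSubmodule N π))
    (hU : ∀ (x : G) (w : IndSubmodule N π), w ∈ U → IndRep N π x w ∈ U) {v : V} (hv0 : v ≠ 0)
    (hv : indSingle π v ∈ U) : U = ⊤ := by
  have hS : U.comap (indSingle π) = ⊤ := by
    refine ((isIrreducible_iff.1 ‹_›).2 _ fun n w hw => ?_).resolve_left fun h => hv0 ?_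
    · rw [Submodule.mem_comap, indSingle_rep_apply]
      exact hU n _ hw
    · simpa [h] using (show v ∈ U.comap (indSingle π) from hv)
  have := Fintype.ofFinite (G ⧸ N)
  refine eq_top_iff.2 fun f _ => ?_
  rw [← sum_indRep_indSingle f]
  exact U.sum_mem fun c _ => hU _ _ (hS ▸ trivial : _ ∈ U.comap (indSingle π))

end Induced

/-- Let `N` be a normal subgroup of finite index in `G` and `(π, V)` an
irreducible representation of `N` on a nonzero complex vector space. If for every
`x ∈ G` with `x ∉ N` the conjugate representation `π^x` is not isomorphic to `π`, then
the induced representation `Ind_N^G π` is irreducible. -/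
theorem induced_irreducible_of_not_iso {G : Type*} [Group G] (N : Subgroup G)
    (hN : N.Normal) [N.FiniteIndex]
    {V : Type*} [AddCommGroup V] [Module ℂ V] [Nontrivial V]
    (π : Representation ℂ ↥N V)
    (hirr : ∀ U : Submodule ℂ V, (∀ (g : ↥N) (v : V), v ∈ U → π g v ∈ U) →
      U = ⊥ ∨ U = ⊤)
    (hnoniso : ∀ x : G, x ∉ N →
      ¬∃ T : V ≃ₗ[ℂ] V, ∀ g g' : ↥N, (↑g' : G) = x⁻¹ * ↑g * x →
        (T : V →ₗ[ℂ] V) ∘ₗ (π g' : V →ₗ[ℂ] V) =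
          (π g : V →ₗ[ℂ] V) ∘ₗ (T : V →ₗ[ℂ] V)) :
    ∀ U : Submodule ℂ ↥(IndSubmodule N π),
      (∀ (x : G) (w : ↥(IndSubmodule N π)), w ∈ U → IndRep N π x w ∈ U) →
      U = ⊥ ∨ U = ⊤ := by
  intro U hU
  have : π.IsIrreducible := isIrreducible_iff.2 ⟨inferInstance, hirr⟩
  refine or_iff_not_imp_left.2 fun hU0 => ?_
  obtain ⟨f, hfU, hf1, hmin⟩ := exists_indSupport_minimal_apply_one_ne_zero U hU hU0
  have hfN : ∀ x ∉ N, (f : G → V) x = 0 := fun x hx =>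
    have := isEmpty_equiv_conjugate (hnoniso x hx)
    apply_eq_zero_of_indSupport_minimal U (fun n => hU n) hfU hf1 hmin
  exact eq_top_of_indSingle_mem U hU hf1 (eq_indSingle_of_apply_eq_zero f hfN ▸ hfU)
end

section
/- Assume V is finite-dimensional and that there exists x ∈ G with x ∉ N such that the conjugate representation π^x is isomorphic to π (i.e., there is an invertible linear map T : V → V with T ∘ π(x⁻¹gx) = π(g) ∘ T for all g ∈ N). Then the induced representation Ind_N^G π is reducible (not irreducible). -/
/-!
Right translation by `x` followed by the isomorphism `T : π^x ≅ π` is an endomorphism of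
`Ind_N^G π` commuting with the left translation action of `G`. It is not a scalar: the
function supported on `N` with value `v ≠ 0` at `1` is sent to one whose value at `x⁻¹ ∉ N`
is `T v ≠ 0`. Since `Ind_N^G π` is finite dimensional, an eigenspace of this endomorphism is
then a proper nonzero subrepresentation.
-/

theorem Representation.not_irreducible_of_commute_of_ne_algebraMap {K G M : Type*} [Field K]
    [IsAlgClosed K] [Monoid G] [AddCommGroup M] [Module K M] [FiniteDimensional K M]
    (ρ : Representation K G M) (S : Module.End K M) (hS : ∀ g, Commute S (ρ g))
    (hS_ne : ∀ μ : K, S ≠ algebraMap K (Module.End K M) μ) :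
    ¬ ∀ U : Submodule K M, (∀ (g : G) (w : M), w ∈ U → ρ g w ∈ U) → U = ⊥ ∨ U = ⊤ := by
  intro hirr
  cases subsingleton_or_nontrivial M
  · exact hS_ne 0 (Subsingleton.elim _ _)
  obtain ⟨μ, hμ⟩ := Module.End.exists_eigenvalue S
  have hinv : ∀ (g : G) (w : M), w ∈ S.eigenspace μ → ρ g w ∈ S.eigenspace μ := by
    intro g w hw
    rw [Module.End.mem_eigenspace_iff] at hw ⊢
    rw [← Module.End.mul_apply, (hS g).eq, Module.End.mul_apply, hw, map_smul]
  rcases hirr _ hinv with hbot | htop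
  · exact hμ hbot
  · refine hS_ne μ (LinearMap.ext fun w => ?_)
    have hw : w ∈ S.eigenspace μ := htop ▸ Submodule.mem_top
    simpa using Module.End.mem_eigenspace_iff.mp hw

namespace IndSubmodule

variable {G W : Type*} [Group G] {H : Subgroup G} [AddCommGroup W] [Module ℂ W]
  {ρ : Representation ℂ H W}

theorem apply_mul (f : IndSubmodule H ρ) (g : G) (h : H) :
    (f : G → W) (g * h) = ρ h⁻¹ ((f : G → W) g) :=
  f.2 g h

theorem ext_out {f₁ f₂ : IndSubmodule H ρ}
    (hf : ∀ q : G ⧸ H, (f₁ : G → W) q.out = (f₂ : G → W) q.out) : f₁ = f₂ := by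
  ext g
  obtain ⟨h, hout⟩ := QuotientGroup.mk_out_eq_mul H g
  have hg : g = (g : G ⧸ H).out * ↑h⁻¹ := by simp [hout]
  rw [hg, apply_mul f₁, apply_mul f₂, hf]

instance [H.FiniteIndex] [FiniteDimensional ℂ W] : FiniteDimensional ℂ (IndSubmodule H ρ) :=
  FiniteDimensional.of_injective
    (LinearMap.pi fun q : G ⧸ H => (LinearMap.proj q.out).comp (IndSubmodule H ρ).subtype)
    fun _ _ hf => ext_out (congrFun hf)

open Classical in
noncomputable def single (v : W) : IndSubmodule H ρ :=
  ⟨fun g => if hg : g ∈ H then ρ ⟨g, hg⟩⁻¹ v else 0, by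
    intro g h
    by_cases hg : g ∈ H
    · have hgh : g * h ∈ H := H.mul_mem hg h.2
      simp only [dif_pos hg, dif_pos hgh]
      rw [← Module.End.mul_apply, ← map_mul, ← mul_inv_rev]
      rfl
    · have hgh : g * h ∉ H := fun hgh => hg (by simpa using H.mul_mem hgh (H.inv_mem h.2))
      simp only [dif_neg hg, dif_neg hgh, map_zero]⟩

theorem single_apply_one (v : W) : ((single v : IndSubmodule H ρ) : G → W) 1 = v := by
  simp only [single, dif_pos H.one_mem]
  change ρ (1 : H)⁻¹ v = v
  simp

theorem single_apply_of_notMem (v : W) {g : G} (hg : g ∉ H) :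
    ((single v : IndSubmodule H ρ) : G → W) g = 0 := by
  simp [single, hg]

variable [H.Normal]

def rightTranslate (x : G) (T : W →ₗ[ℂ] W)
    (hT : ∀ h h' : H, (h' : G) = x⁻¹ * h * x → T ∘ₗ ρ h' = ρ h ∘ₗ T) :
    Module.End ℂ (IndSubmodule H ρ) where
  toFun f := ⟨fun g => T ((f : G → W) (g * x)), by
    intro g h
    let h' : H := ⟨x⁻¹ * h * x, ‹H.Normal›.conj_mem' h h.2 x⟩
    have hT' : T ∘ₗ ρ h'⁻¹ = ρ h⁻¹ ∘ₗ T := hT h⁻¹ h'⁻¹ (by simp [h', mul_assoc])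
    calc T ((f : G → W) (g * h * x)) = T ((f : G → W) (g * x * h')) := by
          simp [h', mul_assoc]
      _ = ρ h⁻¹ (T ((f : G → W) (g * x))) := by
          rw [apply_mul, ← LinearMap.comp_apply, hT', LinearMap.comp_apply]⟩
  map_add' _ _ := by ext; simp
  map_smul' _ _ := by ext; simp

variable {x : G} {T : W →ₗ[ℂ] W}
  {hT : ∀ h h' : H, (h' : G) = x⁻¹ * h * x → T ∘ₗ ρ h' = ρ h ∘ₗ T}

theorem rightTranslate_apply (f : IndSubmodule H ρ) (g : G) :
    (rightTranslate x T hT f : G → W) g = T ((f : G → W) (g * x)) :=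
  rfl

theorem commute_rightTranslate_indRep (a : G) :
    Commute (rightTranslate x T hT) (IndRep H ρ a) := by
  ext f g
  simp only [Module.End.mul_apply]
  change T ((f : G → W) (a⁻¹ * (g * x))) = T ((f : G → W) (a⁻¹ * g * x))
  rw [mul_assoc]

theorem rightTranslate_ne_algebraMap [Nontrivial W] (hx : x ∉ H) (hT_inj : Function.Injective T)
    (μ : ℂ) : rightTranslate x T hT ≠ algebraMap ℂ (Module.End ℂ (IndSubmodule H ρ)) μ := by
  intro hμ
  obtain ⟨v, hv⟩ := exists_ne (0 : W)
  have hval := congrArg (fun f : IndSubmodule H ρ => (f : G → W) x⁻¹)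
    (LinearMap.congr_fun hμ (single v))
  simp only [rightTranslate_apply, inv_mul_cancel, single_apply_one, Module.algebraMap_end_apply,
    Submodule.coe_smul, Pi.smul_apply, single_apply_of_notMem v (H.inv_mem_iff.not.mpr hx),
    smul_zero] at hval
  exact hv (hT_inj (hval.trans T.map_zero.symm))

end IndSubmodule

theorem induced_reducible_of_iso_general {G : Type*} [Group G] (N : Subgroup G)
    (hN : N.Normal) [N.FiniteIndex]
    {V : Type*} [AddCommGroup V] [Module ℂ V] [Nontrivial V] [FiniteDimensional ℂ V]
    (π : Representation ℂ ↥N V)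
    (hiso : ∃ x : G, x ∉ N ∧
      ∃ T : V ≃ₗ[ℂ] V, ∀ g g' : ↥N, (↑g' : G) = x⁻¹ * ↑g * x →
        (T : V →ₗ[ℂ] V) ∘ₗ (π g' : V →ₗ[ℂ] V) =
          (π g : V →ₗ[ℂ] V) ∘ₗ (T : V →ₗ[ℂ] V)) :
    ¬ (∀ U : Submodule ℂ ↥(IndSubmodule N π),
        (∀ (x : G) (w : ↥(IndSubmodule N π)), w ∈ U → IndRep N π x w ∈ U) →
        U = ⊥ ∨ U = ⊤) := by
  obtain ⟨x, hx, T, hT⟩ := hiso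
  exact (IndRep N π).not_irreducible_of_commute_of_ne_algebraMap
    (IndSubmodule.rightTranslate x T hT) IndSubmodule.commute_rightTranslate_indRep
    (IndSubmodule.rightTranslate_ne_algebraMap hx T.injective)

/-- Let `N` be a normal subgroup of finite index in `G` and `(π, V)`
an irreducible representation of `N` on a nonzero finite-dimensional complex vector
space. If there exists `x ∈ G` with `x ∉ N` such that the conjugate representation
`π^x` is isomorphic to `π`, then the induced representation `Ind_N^G π` is reducible
(not irreducible). -/
theorem induced_reducible_of_iso {G : Type*} [Group G] (N : Subgroup G)
    (hN : N.Normal) [N.FiniteIndex]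
    {V : Type*} [AddCommGroup V] [Module ℂ V] [Nontrivial V] [FiniteDimensional ℂ V]
    (π : Representation ℂ ↥N V)
    (hirr : ∀ U : Submodule ℂ V, (∀ (g : ↥N) (v : V), v ∈ U → π g v ∈ U) →
      U = ⊥ ∨ U = ⊤)
    (hiso : ∃ x : G, x ∉ N ∧
      ∃ T : V ≃ₗ[ℂ] V, ∀ g g' : ↥N, (↑g' : G) = x⁻¹ * ↑g * x →
        (T : V →ₗ[ℂ] V) ∘ₗ (π g' : V →ₗ[ℂ] V) =
          (π g : V →ₗ[ℂ] V) ∘ₗ (T : V →ₗ[ℂ] V)) :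
    ¬ (∀ U : Submodule ℂ ↥(IndSubmodule N π),
        (∀ (x : G) (w : ↥(IndSubmodule N π)), w ∈ U → IndRep N π x w ∈ U) →
        U = ⊥ ∨ U = ⊤) :=
  induced_reducible_of_iso_general N hN π hiso
end

section
/- Suppose 𝔭 ≠ 0, X₀ is a nonzero element of 𝔨 whose real span equals the center of 𝔨 (the set of Z ∈ 𝔨 with [Z, W] = 0 for all W ∈ 𝔨), and [X₀, [X₀, Y]] = -Y for all Y ∈ 𝔭. Let φ be a Lie algebra automorphism of 𝔤 with φ(𝔨) = 𝔨 and φ(𝔭) = 𝔭. Then φ(X₀) = X₀ or φ(X₀) = -X₀. -/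
/-!
An automorphism preserving `𝔨` preserves the center of `𝔨`, which is the line `ℝ X₀`, so
`φ X₀ = c • X₀`. Transporting `(ad X₀)² = -1` on `𝔭` through `φ` gives `(ad (c • X₀))² = -1`
on `𝔭`, i.e. `c² • (-Y) = -Y`; testing on a nonzero `Y ∈ 𝔭` forces `c² = 1`.
-/

namespace LieEquiv

variable {R L : Type*} [CommRing R] [LieRing L] [LieAlgebra R L] (φ : L ≃ₗ⁅R⁆ L)
  {k : Submodule R L}

theorem apply_mem_of_map_eq (hφk : k.map φ.toLieHom.toLinearMap = k) {x : L} (hx : x ∈ k) :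
    φ x ∈ k :=
  hφk ▸ Submodule.mem_map_of_mem hx

theorem symm_apply_mem_of_map_eq (hφk : k.map φ.toLieHom.toLinearMap = k) {x : L}
    (hx : x ∈ k) : φ.symm x ∈ k :=
  (Submodule.mem_map_equiv (e := φ.toLinearEquiv) k).1 (hφk.symm ▸ hx)

theorem forall_lie_apply_eq_zero_of_map_eq (hφk : k.map φ.toLieHom.toLinearMap = k) {Z : L}
    (hZ : ∀ W ∈ k, ⁅Z, W⁆ = 0) : ∀ W ∈ k, ⁅φ Z, W⁆ = 0 := by
  intro W hW
  rw [← φ.apply_symm_apply W, ← φ.map_lie, hZ _ (φ.symm_apply_mem_of_map_eq hφk hW), map_zero]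

theorem forall_lie_lie_apply_eq_neg_of_map_eq (hφk : k.map φ.toLieHom.toLinearMap = k)
    {X : L} (hX : ∀ Y ∈ k, ⁅X, ⁅X, Y⁆⁆ = -Y) : ∀ Y ∈ k, ⁅φ X, ⁅φ X, Y⁆⁆ = -Y := by
  intro Y hY
  rw [← φ.apply_symm_apply Y, ← φ.map_lie, ← φ.map_lie,
    hX _ (φ.symm_apply_mem_of_map_eq hφk hY), map_neg]

end LieEquiv

theorem eq_one_or_eq_neg_one_of_lie_smul_lie_smul {R L : Type*} [CommRing R] [IsDomain R]
    [LieRing L] [LieAlgebra R L] [Module.IsTorsionFree R L] {X Y : L} {c : R} (hY : Y ≠ 0)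
    (hX : ⁅X, ⁅X, Y⁆⁆ = -Y) (hcX : ⁅c • X, ⁅c • X, Y⁆⁆ = -Y) : c = 1 ∨ c = -1 := by
  rw [smul_lie, smul_lie, lie_smul, hX, smul_smul, smul_neg, neg_inj] at hcX
  exact mul_self_eq_one_iff.1 (smul_left_injective R hY (hcX.trans (one_smul R Y).symm))

theorem automorphism_fixes_center_up_to_sign_general {L : Type*} [LieRing L] [LieAlgebra ℝ L]
    (k p : Submodule ℝ L)
    (hpne : p ≠ ⊥)
    (X₀ : L)
    (hcenter : ∀ Z : L, Z ∈ Submodule.span ℝ ({X₀} : Set L) ↔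
      Z ∈ k ∧ ∀ W ∈ k, ⁅Z, W⁆ = 0)
    (hJ : ∀ Y ∈ p, ⁅X₀, ⁅X₀, Y⁆⁆ = -Y)
    (φ : L ≃ₗ⁅ℝ⁆ L)
    (hφk : Submodule.map φ.toLieHom.toLinearMap k = k)
    (hφp : Submodule.map φ.toLieHom.toLinearMap p = p) :
    φ X₀ = X₀ ∨ φ X₀ = -X₀ := by
  obtain ⟨hX₀k, hX₀central⟩ := (hcenter X₀).1 (Submodule.mem_span_singleton_self X₀)
  obtain ⟨c, hc⟩ := Submodule.mem_span_singleton.1 <| (hcenter (φ X₀)).2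
    ⟨φ.apply_mem_of_map_eq hφk hX₀k, φ.forall_lie_apply_eq_zero_of_map_eq hφk hX₀central⟩
  obtain ⟨Y, hYp, hY⟩ := (Submodule.ne_bot_iff p).1 hpne
  have hφJ := φ.forall_lie_lie_apply_eq_neg_of_map_eq hφp hJ Y hYp
  rw [← hc] at hφJ ⊢
  rcases eq_one_or_eq_neg_one_of_lie_smul_lie_smul hY (hJ Y hYp) hφJ with rfl | rfl
  · exact .inl (one_smul ℝ X₀)
  · exact .inr (neg_one_smul ℝ X₀)

/-- Let `𝔤` be a real Lie algebra with a Cartan decomposition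
`𝔤 = 𝔨 ⊕ 𝔭` (so `[𝔨,𝔨] ⊆ 𝔨`, `[𝔨,𝔭] ⊆ 𝔭`, `[𝔭,𝔭] ⊆ 𝔨`). Suppose `𝔭 ≠ 0`, `X₀` is a
nonzero element whose real span equals the center of `𝔨`, and `[X₀,[X₀,Y]] = -Y` for
all `Y ∈ 𝔭`. If `φ` is a Lie algebra automorphism of `𝔤` with `φ(𝔨) = 𝔨` and
`φ(𝔭) = 𝔭`, then `φ(X₀) = X₀` or `φ(X₀) = -X₀`. -/
theorem automorphism_fixes_center_up_to_sign {L : Type*} [LieRing L] [LieAlgebra ℝ L]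
    (k p : Submodule ℝ L) (hcompl : IsCompl k p)
    (hkk : ∀ x ∈ k, ∀ y ∈ k, ⁅x, y⁆ ∈ k)
    (hkp : ∀ x ∈ k, ∀ y ∈ p, ⁅x, y⁆ ∈ p)
    (hpp : ∀ x ∈ p, ∀ y ∈ p, ⁅x, y⁆ ∈ k)
    (hpne : p ≠ ⊥)
    (X₀ : L) (hX₀ : X₀ ≠ 0)
    (hcenter : ∀ Z : L, Z ∈ Submodule.span ℝ ({X₀} : Set L) ↔
      Z ∈ k ∧ ∀ W ∈ k, ⁅Z, W⁆ = 0)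
    (hJ : ∀ Y ∈ p, ⁅X₀, ⁅X₀, Y⁆⁆ = -Y)
    (φ : L ≃ₗ⁅ℝ⁆ L)
    (hφk : Submodule.map φ.toLieHom.toLinearMap k = k)
    (hφp : Submodule.map φ.toLieHom.toLinearMap p = p) :
    φ X₀ = X₀ ∨ φ X₀ = -X₀ :=
  automorphism_fixes_center_up_to_sign_general k p hpne X₀ hcenter hJ φ hφk hφp
end
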